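/- arXiv:1212.1247 — 2 statements merged into one kernel-verified Lean document; each statement's English description precedes it below -/
import Mathlib

section
/- Let S = {x_1,…,x_n} be points in a metric space (K,d) with diameter at most 1, and suppose K can be covered by N open d-balls of radius δ/4. Let M be the n×n matrix with entries m_{ij} = d(x_i, x_j). Then the nuclear norm satisfies ‖M‖_* ≤ n^{3/2}·δ + sqrt(N)·n. -/
noncomputable def singularValues {m n : ℕ} (A : Matrix (Fin m) (Fin n) ℝ) : Fin n → ℝ :=
  fun i => Real.sqrt ((show (A.transpose * A).IsHermitian by
    simpa [Matrix.conjTranspose_eq_transpose_of_trivial] using Matrix.isHermitian_conjTranspose_mul_self A).eigenvalues i)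

noncomputable def nuclearNorm {m n : ℕ} (A : Matrix (Fin m) (Fin n) ℝ) : ℝ :=
  ∑ i, singularValues A i

noncomputable def frobeniusNorm {m n : ℕ} (A : Matrix (Fin m) (Fin n) ℝ) : ℝ :=
  Real.sqrt (∑ i, ∑ j, (A i j)^2)

noncomputable def matrixSpectralNorm {m n : ℕ} (A : Matrix (Fin m) (Fin n) ℝ) : ℝ :=
  ⨆ i, singularValues A i

/-! The nuclear norm is the dual of the operator norm: `‖A‖_* = max {tr (Wᵀ A) : ‖W‖ ≤ 1}`, the
maximum being attained at the polar factor of `A`; this makes it subadditive. By Cauchy–Schwarz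
on the nonzero singular values, `‖A‖_* ≤ √(rank A) ‖A‖_F`. Now split the distance matrix as
`M = A + E`, where `A` measures distances from the centre of a ball containing `x i` instead of
from `x i`. The matrix `A` has at most `N` distinct rows and entries in `[0, 1]`, so
`‖A‖_* ≤ √N n`; the entries of `E` are below `δ / 4` by the triangle inequality, so
`‖E‖_* ≤ √n (n δ)`. -/

open Matrix Finset
open scoped InnerProductSpace Matrix.Norms.L2Operator

lemma Matrix.isHermitian_transpose_mul_self {ι κ : Type*} [Fintype κ] (A : Matrix κ ι ℝ) :
    (Aᵀ * A).IsHermitian := by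
  simpa using isHermitian_conjTranspose_mul_self A

lemma Matrix.inner_toEuclideanLin_toEuclideanLin {𝕜 ι κ : Type*} [RCLike 𝕜]
    [Fintype ι] [DecidableEq ι] [Fintype κ] [DecidableEq κ] (W A : Matrix κ ι 𝕜)
    (x y : EuclideanSpace 𝕜 ι) :
    ⟪toEuclideanLin W x, toEuclideanLin A y⟫_𝕜 = ⟪x, toEuclideanLin (Wᴴ * A) y⟫_𝕜 := by
  rw [toLpLin_mul_same, LinearMap.comp_apply, toEuclideanLin_conjTranspose_eq_adjoint,
    LinearMap.adjoint_inner_right]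

lemma Matrix.norm_toEuclideanLin_le {𝕜 ι κ : Type*} [RCLike 𝕜] [Fintype ι] [DecidableEq ι]
    [Fintype κ] (W : Matrix κ ι 𝕜) (x : EuclideanSpace 𝕜 ι) :
    ‖toEuclideanLin W x‖ ≤ ‖W‖ * ‖x‖ :=
  (toEuclideanLin.trans LinearMap.toContinuousLinearMap W).le_opNorm x

lemma Matrix.trace_eq_sum_inner {𝕜 ι : Type*} [RCLike 𝕜] [Fintype ι] [DecidableEq ι]
    (C : Matrix ι ι 𝕜) (b : OrthonormalBasis ι 𝕜 (EuclideanSpace 𝕜 ι)) :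
    C.trace = ∑ i, ⟪b i, toEuclideanLin C (b i)⟫_𝕜 := by
  rw [← LinearMap.trace_eq_sum_inner, LinearMap.trace_eq_matrix_trace 𝕜
    (EuclideanSpace.basisFun ι 𝕜).toBasis, toEuclideanLin_eq_toLin_orthonormal,
    LinearMap.toMatrix_toLin]

variable {m n : ℕ}

section SingularVectors

variable (A : Matrix (Fin m) (Fin n) ℝ)

noncomputable abbrev rightSingularBasis : OrthonormalBasis (Fin n) ℝ (EuclideanSpace ℝ (Fin n)) :=
  A.isHermitian_transpose_mul_self.eigenvectorBasis

noncomputable abbrev rightSingularUnitary : unitary (Matrix (Fin n) (Fin n) ℝ) :=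
  A.isHermitian_transpose_mul_self.eigenvectorUnitary

local notation "U" => (rightSingularUnitary A : Matrix (Fin n) (Fin n) ℝ)

lemma sq_singularValues (i : Fin n) :
    singularValues A i ^ 2 = A.isHermitian_transpose_mul_self.eigenvalues i :=
  Real.sq_sqrt (eigenvalues_conjTranspose_mul_self_nonneg A i)

lemma norm_toEuclideanLin_rightSingularBasis (i : Fin n) :
    ‖toEuclideanLin A (rightSingularBasis A i)‖ = singularValues A i := by
  rw [norm_eq_sqrt_real_inner, inner_toEuclideanLin_toEuclideanLin,
    conjTranspose_eq_transpose_of_trivial, toLpLin_apply, IsHermitian.mulVec_eigenvectorBasis]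
  simp [inner_smul_right, singularValues]

lemma star_rightSingularUnitary_mul_transpose_mul_self_mul :
    star U * (Aᵀ * A) * U = diagonal fun i => singularValues A i ^ 2 := by
  simpa [Unitary.conjStarAlgAut_star_apply, sq_singularValues] using
    A.isHermitian_transpose_mul_self.conjStarAlgAut_star_eigenvectorUnitary

end SingularVectors

lemma trace_transpose_mul_le_nuclearNorm (A W : Matrix (Fin m) (Fin n) ℝ) (hW : ‖W‖ ≤ 1) :
    (Wᵀ * A).trace ≤ nuclearNorm A := by
  rw [trace_eq_sum_inner _ (rightSingularBasis A), nuclearNorm]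
  gcongr with i
  set v := rightSingularBasis A i
  have hWv : ‖toEuclideanLin W v‖ ≤ 1 :=
    (norm_toEuclideanLin_le W v).trans <| by
      rw [(rightSingularBasis A).norm_eq_one, mul_one]; exact hW
  calc ⟪v, toEuclideanLin (Wᵀ * A) v⟫_ℝ = ⟪toEuclideanLin W v, toEuclideanLin A v⟫_ℝ := by
        rw [inner_toEuclideanLin_toEuclideanLin, conjTranspose_eq_transpose_of_trivial]
    _ ≤ ‖toEuclideanLin W v‖ * ‖toEuclideanLin A v‖ := real_inner_le_norm _ _
    _ ≤ singularValues A i := by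
        rw [norm_toEuclideanLin_rightSingularBasis]
        exact mul_le_of_le_one_left (Real.sqrt_nonneg _) hWv

/-- The partial isometry `A (AᵀA)^{-1/2}` of the polar decomposition of `A`; on a right singular
vector with `σ i = 0` it vanishes because `0⁻¹ = 0`. -/
noncomputable def polarFactor (A : Matrix (Fin m) (Fin n) ℝ) : Matrix (Fin m) (Fin n) ℝ :=
  A * ((rightSingularUnitary A : Matrix (Fin n) (Fin n) ℝ) *
    diagonal (fun i => (singularValues A i)⁻¹) *
    star (rightSingularUnitary A : Matrix (Fin n) (Fin n) ℝ))

section polarFactor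

variable (A : Matrix (Fin m) (Fin n) ℝ)

local notation "U" => (rightSingularUnitary A : Matrix (Fin n) (Fin n) ℝ)
local notation "σ" => singularValues A

lemma transpose_polarFactor :
    (polarFactor A)ᵀ = U * diagonal (fun i => (σ i)⁻¹) * star U * Aᵀ := by
  have hstar : star U = Uᵀ := by rw [star_eq_conjTranspose, conjTranspose_eq_transpose_of_trivial]
  simp [polarFactor, hstar, transpose_mul, Matrix.mul_assoc]

lemma transpose_polarFactor_mul_polarFactor :
    (polarFactor A)ᵀ * polarFactor A
      = U * diagonal (fun i => (σ i)⁻¹ * σ i ^ 2 * (σ i)⁻¹) * star U := by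
  rw [transpose_polarFactor, polarFactor, ← diagonal_mul_diagonal, ← diagonal_mul_diagonal,
    ← star_rightSingularUnitary_mul_transpose_mul_self_mul]
  simp only [Matrix.mul_assoc]

lemma norm_polarFactor_le_one : ‖polarFactor A‖ ≤ 1 := by
  have h : ‖(polarFactor A)ᴴ * polarFactor A‖ ≤ 1 := by
    rw [conjTranspose_eq_transpose_of_trivial, transpose_polarFactor_mul_polarFactor,
      ← Unitary.coe_star, CStarRing.norm_mul_coe_unitary, CStarRing.norm_coe_unitary_mul,
      l2_opNorm_diagonal]
    refine pi_norm_le_iff_of_nonneg zero_le_one |>.mpr fun i => ?_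
    rcases eq_or_ne (σ i) 0 with h | h
    · simp [h]
    · rw [show (σ i)⁻¹ * σ i ^ 2 * (σ i)⁻¹ = 1 by field_simp, norm_one]
  rw [l2_opNorm_conjTranspose_mul_self] at h
  nlinarith [norm_nonneg (polarFactor A)]

lemma trace_transpose_polarFactor_mul : ((polarFactor A)ᵀ * A).trace = nuclearNorm A := by
  calc ((polarFactor A)ᵀ * A).trace
      = (diagonal (fun i => (σ i)⁻¹) * (star U * (Aᵀ * A) * U)).trace := by
        rw [transpose_polarFactor, Matrix.mul_assoc, Matrix.mul_assoc, Matrix.mul_assoc,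
          trace_mul_comm]
        simp only [Matrix.mul_assoc]
    _ = nuclearNorm A := by
        rw [star_rightSingularUnitary_mul_transpose_mul_self_mul, diagonal_mul_diagonal,
          trace_diagonal, nuclearNorm]
        refine sum_congr rfl fun i _ => ?_
        rcases eq_or_ne (σ i) 0 with h | h
        · simp [h]
        · field_simp

end polarFactor

lemma nuclearNorm_add_le (A B : Matrix (Fin m) (Fin n) ℝ) :
    nuclearNorm (A + B) ≤ nuclearNorm A + nuclearNorm B := by
  set W := polarFactor (A + B)
  calc nuclearNorm (A + B) = (Wᵀ * A).trace + (Wᵀ * B).trace := by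
        rw [← trace_add, ← Matrix.mul_add, trace_transpose_polarFactor_mul]
    _ ≤ nuclearNorm A + nuclearNorm B :=
        add_le_add (trace_transpose_mul_le_nuclearNorm A W (norm_polarFactor_le_one _))
          (trace_transpose_mul_le_nuclearNorm B W (norm_polarFactor_le_one _))

lemma sum_sq_singularValues (A : Matrix (Fin m) (Fin n) ℝ) :
    ∑ i, singularValues A i ^ 2 = ∑ i, ∑ j, A i j ^ 2 := by
  have := A.isHermitian_transpose_mul_self.trace_eq_sum_eigenvalues
  simp only [RCLike.ofReal_real_eq_id, id] at this
  simp_rw [sq_singularValues, ← this, Matrix.trace, sum_comm (γ := Fin m)]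
  simp [Matrix.mul_apply, sq]

lemma card_singularValues_ne_zero (A : Matrix (Fin m) (Fin n) ℝ) :
    #{i | singularValues A i ≠ 0} = A.rank := by
  rw [← rank_transpose_mul_self, A.isHermitian_transpose_mul_self.rank_eq_card_non_zero_eigs,
    Fintype.card_subtype]
  congr! 2 with i
  exact not_congr (Real.sqrt_eq_zero (eigenvalues_conjTranspose_mul_self_nonneg A i))

lemma nuclearNorm_le_sqrt_rank_mul_frobeniusNorm (A : Matrix (Fin m) (Fin n) ℝ) :
    nuclearNorm A ≤ √A.rank * frobeniusNorm A := by
  classical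
  rw [frobeniusNorm, ← Real.sqrt_mul (Nat.cast_nonneg _), ← sum_sq_singularValues, nuclearNorm,
    ← sum_filter_ne_zero, ← card_singularValues_ne_zero]
  refine (le_abs_self _).trans (Real.abs_le_sqrt ?_)
  set s : Finset (Fin n) := {i | singularValues A i ≠ 0}
  calc (∑ i ∈ s, singularValues A i) ^ 2 ≤ #s * ∑ i ∈ s, singularValues A i ^ 2 :=
        sq_sum_le_card_mul_sum_sq
    _ ≤ #s * ∑ i, singularValues A i ^ 2 := by
        gcongr
        exact subset_univ s

lemma nuclearNorm_le_of_rank_le_of_frobeniusNorm_le (A : Matrix (Fin m) (Fin n) ℝ) {r : ℕ} {F : ℝ}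
    (hr : A.rank ≤ r) (hF : frobeniusNorm A ≤ F) : nuclearNorm A ≤ √r * F :=
  (nuclearNorm_le_sqrt_rank_mul_frobeniusNorm A).trans <|
    mul_le_mul (Real.sqrt_le_sqrt (by exact_mod_cast hr)) hF (Real.sqrt_nonneg _)
      (Real.sqrt_nonneg _)

lemma frobeniusNorm_le_of_abs_le (A : Matrix (Fin m) (Fin n) ℝ) {c : ℝ} (hc : 0 ≤ c)
    (h : ∀ i j, |A i j| ≤ c) : frobeniusNorm A ≤ √(m * n) * c := by
  rw [frobeniusNorm, ← Real.sqrt_sq hc, ← Real.sqrt_mul (by positivity)]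
  gcongr
  calc ∑ i, ∑ j, A i j ^ 2 ≤ ∑ _i : Fin m, ∑ _j : Fin n, c ^ 2 :=
        sum_le_sum fun i _ => sum_le_sum fun j _ =>
          sq_le_sq' (neg_le_of_abs_le (h i j)) (le_of_abs_le (h i j))
    _ = m * n * c ^ 2 := by simp [mul_assoc]

theorem distanceMatrix_nuclearNorm_le {K : Type*} [MetricSpace K]
    (hdiam : ∀ a b : K, dist a b ≤ 1)
    {n N : ℕ} (δ : ℝ) (hδ : 0 < δ) (c : Fin N → K)
    (hcov : ∀ z : K, ∃ i, dist z (c i) < δ / 4)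
    (x : Fin n → K) (M : Matrix (Fin n) (Fin n) ℝ)
    (hM : ∀ i j, M i j = dist (x i) (x j)) :
    nuclearNorm M ≤ (n : ℝ) ^ ((3:ℝ)/2) * δ + Real.sqrt (N : ℝ) * n := by
  choose f hf using fun i => hcov (x i)
  set A := (of fun k j => dist (c k) (x j)).submatrix f id
  have hsqrt : √((n : ℝ) * n) = n := Real.sqrt_mul_self (Nat.cast_nonneg n)
  have hA : nuclearNorm A ≤ √N * n := by
    refine nuclearNorm_le_of_rank_le_of_frobeniusNorm_le A
      ((rank_submatrix_le _ f id).trans (rank_le_height _)) ?_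
    simpa [hsqrt] using frobeniusNorm_le_of_abs_le A zero_le_one fun i j => by
      simpa [A, abs_of_nonneg dist_nonneg] using hdiam _ _
  have hE : nuclearNorm (M - A) ≤ √n * (n * δ) := by
    refine nuclearNorm_le_of_rank_le_of_frobeniusNorm_le _ (rank_le_width _) ?_
    rw [← hsqrt]
    refine frobeniusNorm_le_of_abs_le _ hδ.le fun i j => ?_
    rw [Matrix.sub_apply, hM]
    exact (abs_dist_sub_le (x i) (c (f i)) (x j)).trans (by linarith [hf i])
  have hpow : (n : ℝ) ^ ((3:ℝ)/2) = √n * n := by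
    rw [show (3:ℝ)/2 = 1/2 + 1 by norm_num, Real.rpow_add' (Nat.cast_nonneg _) (by norm_num),
      Real.rpow_one, Real.sqrt_eq_rpow]
  calc nuclearNorm M = nuclearNorm (A + (M - A)) := by rw [add_sub_cancel]
    _ ≤ nuclearNorm A + nuclearNorm (M - A) := nuclearNorm_add_le _ _
    _ ≤ (n : ℝ) ^ ((3:ℝ)/2) * δ + √N * n := by rw [hpow]; linarith
end

section
/- Let f : [0,1]² → [0,1], let f_k be its dyadic-average approximation at level k, and let U_1,…,U_n be i.i.d. Uniform[0,1] random variables. Let M and N be the n×n random matrices with entries f(U_i,U_j) and f_k(U_i,U_j) respectively. Then E‖M − N‖_F² ≤ n + n²·‖f − f_k‖²_{L²}, and N has rank at most 2^k almost surely, so that ‖N‖_* ≤ 2^{k/2}·n and E‖M‖_* ≤ (2^{k/2}+1)·n + n^{3/2}·‖f − f_k‖_{L²}. -/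
open MeasureTheory ProbabilityTheory

open Finset

theorem dotProduct_le_sqrt_mul_sqrt {ι : Type*} [Fintype ι] (x y : ι → ℝ) :
    x ⬝ᵥ y ≤ √(x ⬝ᵥ x) * √(y ⬝ᵥ y) := by
  simpa [dotProduct, sq] using Real.sum_mul_le_sqrt_mul_sqrt univ x y

theorem frobeniusNorm_nonneg {m n : ℕ} (A : Matrix (Fin m) (Fin n) ℝ) : 0 ≤ frobeniusNorm A :=
  Real.sqrt_nonneg _

theorem frobeniusNorm_le_of_abs_le_one {m n : ℕ} {A : Matrix (Fin m) (Fin n) ℝ}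
    (hA : ∀ i j, |A i j| ≤ 1) : frobeniusNorm A ≤ √((m : ℝ) * n) := by
  refine Real.sqrt_le_sqrt ?_
  calc ∑ i, ∑ j, A i j ^ 2 ≤ ∑ _i : Fin m, ∑ _j : Fin n, (1 : ℝ) := by
        gcongr with i _ j _
        exact (sq_le_one_iff_abs_le_one _).2 (hA i j)
    _ = m * n := by simp

namespace Matrix

variable {m n : ℕ}

theorem isHermitian_transpose_mul_self_s19 (A : Matrix (Fin m) (Fin n) ℝ) : (Aᵀ * A).IsHermitian := by
  simpa [conjTranspose_eq_transpose_of_trivial] using isHermitian_conjTranspose_mul_self A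

noncomputable def rightSingularBasis (A : Matrix (Fin m) (Fin n) ℝ) :
    OrthonormalBasis (Fin n) ℝ (EuclideanSpace ℝ (Fin n)) :=
  (isHermitian_transpose_mul_self_s19 A).eigenvectorBasis

section OrthonormalBasis

variable {ι κ : Type*} [Fintype ι] [Fintype κ]

theorem dotProduct_orthonormalBasis [DecidableEq ι] (b : OrthonormalBasis ι ℝ (EuclideanSpace ℝ κ))
    (i j : ι) : ⇑(b i) ⬝ᵥ ⇑(b j) = if i = j then 1 else 0 := by
  rw [← orthonormal_iff_ite.mp b.orthonormal i j, EuclideanSpace.inner_eq_star_dotProduct,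
    star_trivial, dotProduct_comm]

theorem sum_sq_dotProduct_orthonormalBasis (b : OrthonormalBasis ι ℝ (EuclideanSpace ℝ κ))
    (x : κ → ℝ) : ∑ i, (⇑(b i) ⬝ᵥ x) ^ 2 = x ⬝ᵥ x := by
  have := b.sum_inner_mul_inner (WithLp.toLp 2 x) (WithLp.toLp 2 x)
  rw [EuclideanSpace.inner_toLp_toLp] at this
  simpa [sq, EuclideanSpace.inner_eq_star_dotProduct, dotProduct_comm] using this

theorem trace_eq_sum_dotProduct_orthonormalBasis [DecidableEq κ]
    (b : OrthonormalBasis ι ℝ (EuclideanSpace ℝ κ)) (B : Matrix κ κ ℝ) :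
    B.trace = ∑ i, ⇑(b i) ⬝ᵥ (B *ᵥ ⇑(b i)) := by
  have htrace : LinearMap.trace ℝ _ (toLpLin 2 2 B) = B.trace := by
    rw [toLpLin_eq_toLin, LinearMap.trace_eq_matrix_trace ℝ (PiLp.basisFun 2 ℝ κ),
      LinearMap.toMatrix_toLin]
  rw [← htrace, LinearMap.trace_eq_sum_inner _ b]
  simp [EuclideanSpace.inner_eq_star_dotProduct, dotProduct_comm]

end OrthonormalBasis

section SingularValues

variable (A : Matrix (Fin m) (Fin n) ℝ)

theorem singularValues_nonneg (i : Fin n) : 0 ≤ singularValues A i := Real.sqrt_nonneg _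

theorem singularValues_sq (i : Fin n) :
    singularValues A i ^ 2 = (isHermitian_transpose_mul_self_s19 A).eigenvalues i :=
  Real.sq_sqrt ((posSemidef_conjTranspose_mul_self A).eigenvalues_nonneg i)

theorem dotProduct_mulVec_rightSingularBasis (i j : Fin n) :
    (A *ᵥ ⇑(rightSingularBasis A i)) ⬝ᵥ (A *ᵥ ⇑(rightSingularBasis A j)) =
      if i = j then singularValues A i ^ 2 else 0 := by
  rw [dotProduct_mulVec, ← mulVec_transpose, mulVec_mulVec, rightSingularBasis,
    (isHermitian_transpose_mul_self_s19 A).mulVec_eigenvectorBasis, smul_dotProduct,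
    ← rightSingularBasis, dotProduct_orthonormalBasis, singularValues_sq]
  split_ifs <;> simp

theorem sum_sq_singularValues : ∑ i, singularValues A i ^ 2 = ∑ i, ∑ j, A i j ^ 2 := by
  have hdiag (i : Fin n) : ⇑(rightSingularBasis A i) ⬝ᵥ ((Aᵀ * A) *ᵥ ⇑(rightSingularBasis A i)) =
      singularValues A i ^ 2 := by
    rw [← mulVec_mulVec, mulVec_transpose, dotProduct_comm, ← dotProduct_mulVec,
      dotProduct_mulVec_rightSingularBasis, if_pos rfl]
  simp_rw [← hdiag, ← trace_eq_sum_dotProduct_orthonormalBasis, trace, Finset.sum_comm (γ := Fin m)]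
  simp [mul_apply, sq]

theorem nuclearNorm_le_sqrt_card_mul_frobeniusNorm (s : Finset (Fin n))
    (hs : ∀ i ∉ s, singularValues A i = 0) :
    nuclearNorm A ≤ √(#s : ℝ) * frobeniusNorm A := by
  rw [nuclearNorm, ← Finset.sum_subset (f := singularValues A) s.subset_univ fun i _ hi => hs i hi,
    frobeniusNorm, ← sum_sq_singularValues]
  calc ∑ i ∈ s, singularValues A i = ∑ i ∈ s, 1 * singularValues A i := by simp
    _ ≤ √(∑ i ∈ s, (1 : ℝ) ^ 2) * √(∑ i ∈ s, singularValues A i ^ 2) :=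
      Real.sum_mul_le_sqrt_mul_sqrt _ _ _
    _ ≤ √(#s : ℝ) * √(∑ i, singularValues A i ^ 2) := by
      gcongr
      · simp
      · exact s.subset_univ

theorem nuclearNorm_le_sqrt_rank_mul_frobeniusNorm :
    nuclearNorm A ≤ √(A.rank : ℝ) * frobeniusNorm A := by
  classical
  have hrank : A.rank = #{i | singularValues A i ≠ 0} := by
    rw [← rank_conjTranspose_mul_self, conjTranspose_eq_transpose_of_trivial,
      (isHermitian_transpose_mul_self_s19 A).rank_eq_card_non_zero_eigs, Fintype.card_subtype]
    simp [← singularValues_sq]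
  rw [hrank]
  exact nuclearNorm_le_sqrt_card_mul_frobeniusNorm A _ fun i hi => by simpa using hi

theorem nuclearNorm_le_sqrt_mul_frobeniusNorm : nuclearNorm A ≤ √(n : ℝ) * frobeniusNorm A := by
  simpa using nuclearNorm_le_sqrt_card_mul_frobeniusNorm A Finset.univ (by simp)

theorem nuclearNorm_le_of_rank_le {r : ℕ} (hr : A.rank ≤ r) (hA : ∀ i j, |A i j| ≤ 1) :
    nuclearNorm A ≤ √(r : ℝ) * √((m : ℝ) * n) :=
  (nuclearNorm_le_sqrt_rank_mul_frobeniusNorm A).trans <|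
    mul_le_mul (Real.sqrt_le_sqrt (by exact_mod_cast hr)) (frobeniusNorm_le_of_abs_le_one hA)
      (frobeniusNorm_nonneg A) (Real.sqrt_nonneg _)

end SingularValues

section NuclearNormTriangle

variable (A : Matrix (Fin m) (Fin n) ℝ)

theorem trace_mul_eq_sum_rightSingularBasis (Q : Matrix (Fin n) (Fin m) ℝ) :
    (Q * A).trace =
      ∑ i, (⇑(rightSingularBasis A i) ᵥ* Q) ⬝ᵥ (A *ᵥ ⇑(rightSingularBasis A i)) := by
  simp_rw [trace_eq_sum_dotProduct_orthonormalBasis (rightSingularBasis A), ← mulVec_mulVec,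
    dotProduct_mulVec]

theorem trace_mul_le_nuclearNorm (Q : Matrix (Fin n) (Fin m) ℝ)
    (hQ : ∀ x, (x ᵥ* Q) ⬝ᵥ (x ᵥ* Q) ≤ x ⬝ᵥ x) : (Q * A).trace ≤ nuclearNorm A := by
  rw [trace_mul_eq_sum_rightSingularBasis, nuclearNorm]
  gcongr with i
  set v := ⇑(rightSingularBasis A i)
  calc (v ᵥ* Q) ⬝ᵥ (A *ᵥ v) ≤ √((v ᵥ* Q) ⬝ᵥ (v ᵥ* Q)) * √((A *ᵥ v) ⬝ᵥ (A *ᵥ v)) :=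
        dotProduct_le_sqrt_mul_sqrt _ _
    _ ≤ √(v ⬝ᵥ v) * √(singularValues A i ^ 2) := by
        rw [dotProduct_mulVec_rightSingularBasis, if_pos rfl]
        gcongr
        exact hQ v
    _ = singularValues A i := by
        rw [dotProduct_orthonormalBasis, if_pos rfl, Real.sqrt_one, one_mul,
          Real.sqrt_sq (singularValues_nonneg A i)]

/-- With `A = ∑ σᵢ uᵢ vᵢᵀ` the singular value decomposition and `uᵢ = σᵢ⁻¹ A vᵢ`, this is
`∑_{σᵢ ≠ 0} vᵢ uᵢᵀ` (the convention `0⁻¹ = 0` drops the other terms), the transpose of the partial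
isometry in the polar decomposition of `A`: a contraction `Q` attaining `tr (Q A) = ‖A‖_*`. -/
noncomputable def nuclearNormDual : Matrix (Fin n) (Fin m) ℝ :=
  ∑ i, (singularValues A i)⁻¹ •
    vecMulVec ⇑(rightSingularBasis A i) (A *ᵥ ⇑(rightSingularBasis A i))

theorem vecMul_nuclearNormDual (x : Fin n → ℝ) :
    x ᵥ* nuclearNormDual A = ∑ i, ((singularValues A i)⁻¹ * (x ⬝ᵥ ⇑(rightSingularBasis A i))) •
      (A *ᵥ ⇑(rightSingularBasis A i)) := by
  simp [nuclearNormDual, vecMul_sum, vecMul_smul, vecMul_vecMulVec, smul_smul]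

theorem dotProduct_vecMul_nuclearNormDual_le (x : Fin n → ℝ) :
    (x ᵥ* nuclearNormDual A) ⬝ᵥ (x ᵥ* nuclearNormDual A) ≤ x ⬝ᵥ x := by
  rw [vecMul_nuclearNormDual, ← sum_sq_dotProduct_orthonormalBasis (rightSingularBasis A) x]
  simp_rw [sum_dotProduct, dotProduct_sum, smul_dotProduct, dotProduct_smul,
    dotProduct_mulVec_rightSingularBasis]
  simp only [smul_eq_mul, mul_ite, mul_zero, sum_ite_eq, mem_univ, if_true]
  refine Finset.sum_le_sum fun i _ => ?_
  set σ := singularValues A i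
  rw [dotProduct_comm x]
  calc _ = (σ⁻¹ * σ) ^ 2 * (⇑(rightSingularBasis A i) ⬝ᵥ x) ^ 2 := by ring
    _ ≤ 1 * (⇑(rightSingularBasis A i) ⬝ᵥ x) ^ 2 := by
        gcongr
        rcases eq_or_ne σ 0 with h | h <;> simp [h]
    _ = _ := one_mul _

theorem trace_nuclearNormDual_mul : (nuclearNormDual A * A).trace = nuclearNorm A := by
  rw [trace_mul_eq_sum_rightSingularBasis, nuclearNorm]
  refine Finset.sum_congr rfl fun i _ => ?_
  simp_rw [vecMul_nuclearNormDual, sum_dotProduct, smul_dotProduct,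
    dotProduct_mulVec_rightSingularBasis, dotProduct_orthonormalBasis]
  simp only [mul_ite, mul_one, mul_zero, smul_eq_mul, ite_mul, zero_mul, sum_ite_eq', mem_univ,
    if_true]
  rw [sq, ← mul_assoc, inv_mul_mul_self]

theorem nuclearNorm_add_le (A B : Matrix (Fin m) (Fin n) ℝ) :
    nuclearNorm (A + B) ≤ nuclearNorm A + nuclearNorm B :=
  calc nuclearNorm (A + B) = (nuclearNormDual (A + B) * (A + B)).trace :=
        (trace_nuclearNormDual_mul _).symm
    _ = (nuclearNormDual (A + B) * A).trace + (nuclearNormDual (A + B) * B).trace := by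
        rw [Matrix.mul_add, trace_add]
    _ ≤ nuclearNorm A + nuclearNorm B :=
        add_le_add (trace_mul_le_nuclearNorm A _ (dotProduct_vecMul_nuclearNormDual_le _))
          (trace_mul_le_nuclearNorm B _ (dotProduct_vecMul_nuclearNormDual_le _))

end NuclearNormTriangle

end Matrix

def IsGridStep (c : ℝ) (g : ℝ → ℝ → ℝ) : Prop :=
  ∀ x y x' y' : ℝ, ⌊x * c⌋ = ⌊x' * c⌋ → ⌊y * c⌋ = ⌊y' * c⌋ → g x y = g x' y'

namespace IsGridStep

variable {c : ℝ} {g : ℝ → ℝ → ℝ}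

theorem measurable_uncurry (hc : c ≠ 0) (hg : IsGridStep c g) :
    Measurable (Function.uncurry g) := by
  have hfloor (x : ℝ) : ⌊x * c⌋ = ⌊((⌊x * c⌋ : ℝ) / c) * c⌋ := by
    rw [div_mul_cancel₀ _ hc, Int.floor_intCast]
  have hrepr : Function.uncurry g = (fun p : ℤ × ℤ => g (p.1 / c) (p.2 / c)) ∘
      fun z : ℝ × ℝ => (⌊z.1 * c⌋, ⌊z.2 * c⌋) :=
    funext fun z => hg _ _ _ _ (hfloor z.1) (hfloor z.2)
  rw [hrepr]
  exact (measurable_of_countable _).comp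
    ((measurable_fst.mul_const c).floor.prodMk (measurable_snd.mul_const c).floor)

theorem rank_le {r n : ℕ} (hr : 0 < r) (hg : IsGridStep r g) (x : Fin n → ℝ)
    (hx : ∀ i, x i ∈ Set.Ico 0 1) : (Matrix.of fun i j => g (x i) (x j)).rank ≤ r := by
  have hcell (i : Fin n) : ⌊x i * r⌋₊ < r := by
    rw [Nat.floor_lt (mul_nonneg (hx i).1 r.cast_nonneg)]
    exact mul_lt_of_lt_one_left (Nat.cast_pos.2 hr) (hx i).2
  have hfloor (i : Fin n) : ⌊x i * r⌋ = ⌊((⌊x i * r⌋₊ : ℝ) / r) * r⌋ := by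
    rw [div_mul_cancel₀ _ (Nat.cast_ne_zero.2 hr.ne'), Int.floor_natCast,
      Int.natCast_floor_eq_floor (mul_nonneg (hx i).1 r.cast_nonneg)]
  have hsub : (Matrix.of fun i j => g (x i) (x j)) =
      (Matrix.of fun (a : Fin r) j => g (a / r) (x j)).submatrix (fun i => ⟨_, hcell i⟩) id := by
    ext i j
    exact hg _ _ _ _ (hfloor i) rfl
  rw [hsub]
  exact (Matrix.rank_submatrix_le _ _ _).trans (Matrix.rank_le_height _)

end IsGridStep

section Probability

variable {Ω : Type*} [MeasurableSpace Ω] {μ : Measure Ω}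

theorem ae_forall_mem_Ico_of_map_eq {ι : Type*} [Countable ι] {U : ι → Ω → ℝ} {a b : ℝ}
    (hUm : ∀ i, Measurable (U i)) (hUd : ∀ i, μ.map (U i) = volume.restrict (Set.Icc a b)) :
    ∀ᵐ ω ∂μ, ∀ i, U i ω ∈ Set.Ico a b := by
  refine ae_all_iff.2 fun i => ae_of_ae_map (hUm i).aemeasurable ?_
  rw [hUd i, ← Measure.restrict_congr_set Ico_ae_eq_Icc]
  exact ae_restrict_mem measurableSet_Ico

theorem integral_sum_sum_le [IsProbabilityMeasure μ] {α : Type*} [MeasurableSpace α]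
    {ν : Measure α} {n : ℕ} {U : Fin n → Ω → α} (hUm : ∀ i, Measurable (U i))
    (hUd : ∀ i, μ.map (U i) = ν) (hUi : Pairwise fun i j => IndepFun (U i) (U j) μ)
    {F : α × α → ℝ} (hF : Measurable F) (hF01 : ∀ z, F z ∈ Set.Icc 0 1) :
    ∫ ω, ∑ i, ∑ j, F (U i ω, U j ω) ∂μ ≤ n + n ^ 2 * ∫ z, F z ∂ν.prod ν := by
  set I := ∫ z, F z ∂ν.prod ν
  have hint (i j : Fin n) : Integrable (fun ω => F (U i ω, U j ω)) μ :=
    .of_bound (hF.comp ((hUm i).prodMk (hUm j))).aestronglyMeasurable 1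
      (ae_of_all _ fun ω => (Real.norm_of_nonneg (hF01 _).1).trans_le (hF01 _).2)
  have hterm (i j : Fin n) : ∫ ω, F (U i ω, U j ω) ∂μ ≤ I + if i = j then 1 else 0 := by
    rcases eq_or_ne i j with rfl | hij
    · have hI : 0 ≤ I := integral_nonneg fun z => (hF01 z).1
      have hle : ∫ ω, F (U i ω, U i ω) ∂μ ≤ 1 := by
        simpa using integral_mono (hint i i) (integrable_const 1) fun ω => (hF01 _).2
      rw [if_pos rfl]
      linarith
    · rw [if_neg hij, add_zero, ← integral_map ((hUm i).prodMk (hUm j)).aemeasurable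
        hF.aestronglyMeasurable, (hUi hij).map_prod_eq_prod_map_map (hUm i).aemeasurable
        (hUm j).aemeasurable, hUd, hUd]
  calc ∫ ω, ∑ i, ∑ j, F (U i ω, U j ω) ∂μ = ∑ i, ∑ j, ∫ ω, F (U i ω, U j ω) ∂μ := by
        rw [integral_finsetSum _ fun i _ => integrable_finsetSum _ fun j _ => hint i j]
        exact Finset.sum_congr rfl fun i _ => integral_finsetSum _ fun j _ => hint i j
    _ ≤ ∑ i : Fin n, ∑ j : Fin n, (I + if i = j then 1 else 0) := by
        gcongr with i _ j _
        exact hterm i j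
    _ = n + n ^ 2 * I := by
        simp only [sum_add_distrib, sum_const, card_univ, Fintype.card_fin, nsmul_eq_mul,
          sum_ite_eq, mem_univ, if_true, mul_one]
        ring

theorem integral_le_sqrt_integral_sq [IsProbabilityMeasure μ] {φ : Ω → ℝ} (hφ : MemLp φ 2 μ) :
    ∫ ω, φ ω ∂μ ≤ √(∫ ω, φ ω ^ 2 ∂μ) := by
  refine Real.le_sqrt_of_sq_le ?_
  have := variance_nonneg φ μ
  rw [variance_eq_sub hφ] at this
  simpa [sub_nonneg] using this

end Probability

theorem memLp_frobeniusNorm {Ω : Type*} [MeasurableSpace Ω] {μ : Measure Ω} [IsFiniteMeasure μ]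
    {m n : ℕ} {A : Ω → Matrix (Fin m) (Fin n) ℝ} (hA : ∀ i j, Measurable fun ω => A ω i j)
    (hA1 : ∀ ω i j, |A ω i j| ≤ 1) : MemLp (fun ω => frobeniusNorm (A ω)) 2 μ := by
  refine memLp_of_bounded (μ := μ) (ae_of_all _ fun ω =>
    ⟨frobeniusNorm_nonneg (A ω), frobeniusNorm_le_of_abs_le_one (hA1 ω)⟩) ?_ 2
  refine (Measurable.sqrt ?_).aestronglyMeasurable
  exact Finset.measurable_sum _ fun i _ => Finset.measurable_sum _ fun j _ => (hA i j).pow_const 2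

theorem integral_nuclearNorm_le {Ω : Type*} [MeasurableSpace Ω] {μ : Measure Ω}
    [IsProbabilityMeasure μ] {m n : ℕ} {M N : Ω → Matrix (Fin m) (Fin n) ℝ} {a : ℝ} (ha : 0 ≤ a)
    (hN : ∀ᵐ ω ∂μ, nuclearNorm (N ω) ≤ a)
    (hMN : MemLp (fun ω => frobeniusNorm (M ω - N ω)) 2 μ) :
    ∫ ω, nuclearNorm (M ω) ∂μ ≤ a + √(n : ℝ) * √(∫ ω, ∑ i, ∑ j, (M ω i j - N ω i j) ^ 2 ∂μ) := by
  have hM : ∀ᵐ ω ∂μ, nuclearNorm (M ω) ≤ a + √(n : ℝ) * frobeniusNorm (M ω - N ω) :=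
    hN.mono fun ω hω => calc
      nuclearNorm (M ω) ≤ nuclearNorm (N ω) + nuclearNorm (M ω - N ω) := by
        simpa using Matrix.nuclearNorm_add_le (N ω) (M ω - N ω)
      _ ≤ a + √(n : ℝ) * frobeniusNorm (M ω - N ω) :=
        add_le_add hω (Matrix.nuclearNorm_le_sqrt_mul_frobeniusNorm _)
  by_cases hint : Integrable (fun ω => nuclearNorm (M ω)) μ
  swap
  · rw [integral_undef hint]
    positivity
  have hD := (hMN.integrable one_le_two).const_mul √(n : ℝ)
  have hsq (ω : Ω) : frobeniusNorm (M ω - N ω) ^ 2 = ∑ i, ∑ j, (M ω i j - N ω i j) ^ 2 :=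
    Real.sq_sqrt (by positivity)
  calc ∫ ω, nuclearNorm (M ω) ∂μ ≤ ∫ ω, a + √(n : ℝ) * frobeniusNorm (M ω - N ω) ∂μ :=
        integral_mono_ae hint ((integrable_const a).add hD) hM
    _ = a + √(n : ℝ) * ∫ ω, frobeniusNorm (M ω - N ω) ∂μ := by
        rw [integral_add (integrable_const a) hD, integral_const_mul]
        simp
    _ ≤ a + √(n : ℝ) * √(∫ ω, ∑ i, ∑ j, (M ω i j - N ω i j) ^ 2 ∂μ) := by
        simp_rw [← hsq]
        gcongr
        exact integral_le_sqrt_integral_sq hMN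

theorem sqrt_mul_sqrt_add_le {x I : ℝ} (hx : 0 ≤ x) (hI : 0 ≤ I) :
    √x * √(x + x ^ 2 * I) ≤ x + x ^ ((3 : ℝ) / 2) * √I := by
  have hsub : √(x + x ^ 2 * I) ≤ √x + x * √I := by
    refine Real.sqrt_le_iff.2 ⟨by positivity, ?_⟩
    nlinarith [Real.sq_sqrt hx, Real.sq_sqrt hI, Real.sqrt_nonneg x, Real.sqrt_nonneg I,
      mul_nonneg (mul_nonneg hx (Real.sqrt_nonneg x)) (Real.sqrt_nonneg I)]
  have h32 : x ^ ((3 : ℝ) / 2) = x * √x := by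
    rw [Real.sqrt_eq_rpow, ← Real.rpow_one_add' hx (by norm_num)]
    norm_num
  calc √x * √(x + x ^ 2 * I) ≤ √x * (√x + x * √I) := by gcongr
    _ = x + x ^ ((3 : ℝ) / 2) * √I := by
        rw [h32, mul_add, Real.mul_self_sqrt hx]
        ring

theorem graphon_matrix_approximation {n k : ℕ} (f g : ℝ → ℝ → ℝ)
    (hf : Measurable (Function.uncurry f))
    (hfr : ∀ x y, f x y ∈ Set.Icc (0:ℝ) 1)
    (hgr : ∀ x y, g x y ∈ Set.Icc (0:ℝ) 1)
    (hgcell : ∀ x y x' y' : ℝ, ⌊x * 2^k⌋ = ⌊x' * 2^k⌋ → ⌊y * 2^k⌋ = ⌊y' * 2^k⌋ →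
      g x y = g x' y')
    {Ω : Type*} [MeasurableSpace Ω] (μ : Measure Ω) [IsProbabilityMeasure μ]
    (U : Fin n → Ω → ℝ) (hUm : ∀ i, Measurable (U i))
    (hUd : ∀ i, Measure.map (U i) μ = volume.restrict (Set.Icc (0:ℝ) 1))
    (hUi : iIndepFun U μ)
    (M N : Ω → Matrix (Fin n) (Fin n) ℝ)
    (hM : ∀ ω i j, M ω i j = f (U i ω) (U j ω))
    (hN : ∀ ω i j, N ω i j = g (U i ω) (U j ω)) :
    (∫ ω, ∑ i, ∑ j, (M ω i j - N ω i j)^2 ∂μ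
        ≤ (n : ℝ) + (n : ℝ)^2 *
            ∫ z in Set.Icc (0:ℝ) 1 ×ˢ Set.Icc (0:ℝ) 1, (f z.1 z.2 - g z.1 z.2)^2) ∧
    (∀ᵐ ω ∂μ, (N ω).rank ≤ 2^k) ∧
    (∀ᵐ ω ∂μ, nuclearNorm (N ω) ≤ (2:ℝ) ^ ((k:ℝ)/2) * n) ∧
    ∫ ω, nuclearNorm (M ω) ∂μ
      ≤ ((2:ℝ) ^ ((k:ℝ)/2) + 1) * n + (n : ℝ) ^ ((3:ℝ)/2) *
          Real.sqrt
            (∫ z in Set.Icc (0:ℝ) 1 ×ˢ Set.Icc (0:ℝ) 1, (f z.1 z.2 - g z.1 z.2)^2) := by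
  have hg : Measurable (Function.uncurry g) := IsGridStep.measurable_uncurry (by positivity) hgcell
  have hg1 (x y : ℝ) : |g x y| ≤ 1 := (abs_of_nonneg (hgr x y).1).trans_le (hgr x y).2
  have hfg (x y : ℝ) : |f x y - g x y| ≤ 1 :=
    abs_sub_le_of_nonneg_of_le (hfr x y).1 (hfr x y).2 (hgr x y).1 (hgr x y).2
  have hE := integral_sum_sum_le hUm hUd (fun i j hij => hUi.indepFun hij)
    (F := fun z => (f z.1 z.2 - g z.1 z.2) ^ 2) ((hf.sub hg).pow_const 2)
    fun z => ⟨sq_nonneg _, (sq_le_one_iff_abs_le_one _).2 (hfg z.1 z.2)⟩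
  rw [Measure.prod_restrict, ← Measure.volume_eq_prod] at hE
  simp only [← hM, ← hN] at hE
  set I := ∫ z in Set.Icc (0:ℝ) 1 ×ˢ Set.Icc (0:ℝ) 1, (f z.1 z.2 - g z.1 z.2) ^ 2
  have hrank : ∀ᵐ ω ∂μ, (N ω).rank ≤ 2 ^ k :=
    (ae_forall_mem_Ico_of_map_eq hUm hUd).mono fun ω hω => by
      rw [show N ω = Matrix.of fun i j => g (U i ω) (U j ω) from Matrix.ext (hN ω)]
      exact IsGridStep.rank_le (by positivity) (by exact_mod_cast hgcell) _ hω
  have hnucN : ∀ᵐ ω ∂μ, nuclearNorm (N ω) ≤ (2:ℝ) ^ ((k:ℝ)/2) * n := hrank.mono fun ω hω => by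
    have := Matrix.nuclearNorm_le_of_rank_le (N ω) hω fun i j => (hN ω i j).symm ▸ hg1 _ _
    rwa [Real.sqrt_mul_self n.cast_nonneg, Nat.cast_pow, Nat.cast_ofNat, Real.sqrt_eq_rpow,
      ← Real.rpow_natCast, ← Real.rpow_mul zero_le_two, mul_one_div] at this
  refine ⟨hE, hrank, hnucN, ?_⟩
  have hMN : MemLp (fun ω => frobeniusNorm (M ω - N ω)) 2 μ :=
    memLp_frobeniusNorm (fun i j => by
        simp only [Matrix.sub_apply, hM, hN]
        exact (hf.sub hg).comp ((hUm i).prodMk (hUm j)))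
      fun ω i j => by simpa only [Matrix.sub_apply, hM, hN] using hfg _ _
  have hI : 0 ≤ I := integral_nonneg fun z => sq_nonneg _
  calc ∫ ω, nuclearNorm (M ω) ∂μ
      ≤ (2:ℝ) ^ ((k:ℝ)/2) * n + √(n : ℝ) * √(∫ ω, ∑ i, ∑ j, (M ω i j - N ω i j) ^ 2 ∂μ) :=
        integral_nuclearNorm_le (by positivity) hnucN hMN
    _ ≤ (2:ℝ) ^ ((k:ℝ)/2) * n + √(n : ℝ) * √(n + n ^ 2 * I) := by gcongr
    _ ≤ ((2:ℝ) ^ ((k:ℝ)/2) + 1) * n + (n : ℝ) ^ ((3:ℝ)/2) * √I := by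
        linarith [sqrt_mul_sqrt_add_le n.cast_nonneg hI]
end
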